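/- For z > 0 and n ≥ 0, define ζ_n(z)² = z² + n + 1/2 − γ_n(z) − γ_{n+1}(z), where γ_n are the recurrence coefficients of the monic truncated Hermite polynomials (γ_0 = 0). Then ζ_n(z)² − z² > 0 for all n ≥ 0; in particular ζ_0(z)² − z² = z e^{-z²} / (√π · erf(z)). -/

import Mathlib

open Polynomial

/-- The truncated Hermite linear functional `L[p] = ∫_{-z}^{z} p(x) e^{-x²} dx`. -/
noncomputable def truncL (z : ℝ) (p : Polynomial ℝ) : ℝ :=
  ∫ x in (-z)..z, p.eval x * Real.exp (-x ^ 2)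

/-- The error function `erf(z) = (2/√π) ∫_0^z e^{-t²} dt`. -/
noncomputable def errFun (z : ℝ) : ℝ :=
  (2 / Real.sqrt Real.pi) * ∫ t in (0 : ℝ)..z, Real.exp (-t ^ 2)

/-!
Write `H n = L[P_n²]`, which is positive. Integrating `(x P_n(x)² e^{-x²})'` over `[-z, z]`,
and evaluating `L[(x P_n²)' - 2x · x P_n²]` through `L[P_n · x P_n'] = n H_n` and
`L[(x P_n)²] = (γ_n + γ_{n+1}) H_n` (orthogonality and the three-term recurrence), gives
`(2n + 1 - 2γ_n - 2γ_{n+1}) H_n = z (P_n(z)² + P_n(-z)²) e^{-z²}`.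
The right side is positive since `P_n(z) ≠ 0`: otherwise `P_n = (x - z) W` with `deg W < n`, and
`0 = L[P_n W] = -∫ (z - x) W(x)² e^{-x²} dx < 0`. For `n = 0` the identity is explicit, as
`H_0 = √π erf z`.
-/

section OrthogonalPolynomials

variable {R : Type*} [CommRing R]

theorem Polynomial.coeff_X_mul_derivative (p : R[X]) (k : ℕ) :
    (X * derivative p).coeff k = k * p.coeff k := by
  cases k with
  | zero => simp
  | succ k => rw [coeff_X_mul, coeff_derivative, Nat.cast_succ, mul_comm]

theorem Polynomial.degree_X_mul_derivative_sub_lt (p : R[X]) :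
    (X * derivative p - C (p.natDegree : R) * p).degree < (p.natDegree : WithBot ℕ) := by
  rw [degree_lt_iff_coeff_zero]
  intro k hk
  rw [coeff_sub, coeff_C_mul, coeff_X_mul_derivative, ← sub_mul]
  rcases (show p.natDegree ≤ k by exact_mod_cast hk).eq_or_lt with rfl | hlt
  · rw [sub_self, zero_mul]
  · rw [coeff_eq_zero_of_natDegree_lt hlt, mul_zero]

theorem LinearMap.apply_C_mul (L : R[X] →ₗ[R] R) (c : R) (p : R[X]) :
    L (C c * p) = c * L p := by
  rw [← smul_eq_C_mul, map_smul, smul_eq_mul]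

structure IsMonicOrthogonalSeq (L : R[X] →ₗ[R] R) (Q : ℕ → R[X]) : Prop where
  isMonicOfDegree : ∀ n, IsMonicOfDegree (Q n) n
  orthogonal : ∀ m n, m ≠ n → L (Q m * Q n) = 0

namespace IsMonicOrthogonalSeq

variable {L : R[X] →ₗ[R] R} {Q : ℕ → R[X]} {γ : ℕ → R}

theorem zero_eq_one (hQ : IsMonicOrthogonalSeq L Q) : Q 0 = 1 :=
  isMonicOfDegree_zero_iff.1 (hQ.isMonicOfDegree 0)

theorem apply_mul_eq_zero_of_degree_lt (hQ : IsMonicOrthogonalSeq L Q) {n : ℕ} {q : R[X]}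
    (hq : q.degree < n) :
    L (Q n * q) = 0 := by
  nontriviality R
  let S : Sequence R := ⟨Q, fun i => by
    rw [degree_eq_natDegree (hQ.isMonicOfDegree i).ne_zero, (hQ.isMonicOfDegree i).natDegree_eq]⟩
  have hker : degreeLT R n ≤ LinearMap.ker (L ∘ₗ LinearMap.mulLeft R (Q n)) := by
    rw [← S.span_degreeLT fun i _ => (hQ.isMonicOfDegree i).leadingCoeff_eq ▸ isUnit_one,
      Submodule.span_le]
    rintro _ ⟨i, hi, rfl⟩
    exact hQ.orthogonal n i (Set.mem_Iio.1 hi).ne'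
  exact hker (mem_degreeLT.2 hq)

theorem apply_mul_X_mul_derivative (hQ : IsMonicOrthogonalSeq L Q) (n : ℕ) :
    L (Q n * (X * derivative (Q n))) = n * L (Q n * Q n) := by
  have hr := degree_X_mul_derivative_sub_lt (Q n)
  rw [(hQ.isMonicOfDegree n).natDegree_eq] at hr
  calc L (Q n * (X * derivative (Q n)))
      = L (C (n : R) * (Q n * Q n)) + L (Q n * (X * derivative (Q n) - C (n : R) * Q n)) := by
        rw [← map_add]; congr 1; ring
    _ = n * L (Q n * Q n) := by
        rw [L.apply_C_mul, hQ.apply_mul_eq_zero_of_degree_lt hr, add_zero]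

theorem apply_X_mul_mul_succ (hQ : IsMonicOrthogonalSeq L Q) (n : ℕ) :
    L (X * Q n * Q (n + 1)) = L (Q (n + 1) * Q (n + 1)) := by
  nontriviality R
  have hmon : IsMonicOfDegree (X * Q n) (n + 1) := by
    rw [add_comm]; exact (isMonicOfDegree_X R).mul (hQ.isMonicOfDegree n)
  have hr : (X * Q n - Q (n + 1)).degree < ↑(n + 1) :=
    degree_le_natDegree.trans_lt
      (by exact_mod_cast hmon.natDegree_sub_lt n.succ_ne_zero (hQ.isMonicOfDegree (n + 1)))
  calc L (X * Q n * Q (n + 1))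
      = L (Q (n + 1) * Q (n + 1)) + L (Q (n + 1) * (X * Q n - Q (n + 1))) := by
        rw [← map_add]; congr 1; ring
    _ = L (Q (n + 1) * Q (n + 1)) := by
        rw [hQ.apply_mul_eq_zero_of_degree_lt hr, add_zero]

theorem apply_mul_self_succ (hQ : IsMonicOrthogonalSeq L Q)
    (hrec : ∀ n, X * Q (n + 1) = Q (n + 2) + C (γ (n + 1)) * Q n) (n : ℕ) :
    L (Q (n + 1) * Q (n + 1)) = γ (n + 1) * L (Q n * Q n) := by
  rw [← hQ.apply_X_mul_mul_succ, mul_right_comm, hrec, add_mul, map_add, mul_assoc,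
    L.apply_C_mul, hQ.orthogonal _ _ (by omega), zero_add]

theorem apply_X_mul_mul_self (hQ : IsMonicOrthogonalSeq L Q)
    (hrec : ∀ n, X * Q (n + 1) = Q (n + 2) + C (γ (n + 1)) * Q n) (h1 : Q 1 = X)
    (hγ0 : γ 0 = 0) (n : ℕ) :
    L (X * Q n * (X * Q n)) = (γ n + γ (n + 1)) * L (Q n * Q n) := by
  cases n with
  | zero =>
    rw [hQ.zero_eq_one, mul_one, hγ0, zero_add, ← h1, ← hQ.zero_eq_one,
      hQ.apply_mul_self_succ hrec]
  | succ n =>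
    have hsq : X * Q (n + 1) * (X * Q (n + 1)) = Q (n + 2) * Q (n + 2)
        + C (2 * γ (n + 1)) * (Q (n + 2) * Q n) + C (γ (n + 1) ^ 2) * (Q n * Q n) := by
      rw [hrec, C_mul, C_pow, map_ofNat]; ring
    rw [hsq, map_add, map_add, L.apply_C_mul, L.apply_C_mul, hQ.orthogonal (n + 2) n (by omega),
      hQ.apply_mul_self_succ hrec (n + 1), hQ.apply_mul_self_succ hrec n]
    ring

theorem apply_derivative_sub_two_X_mul (hQ : IsMonicOrthogonalSeq L Q)
    (hrec : ∀ n, X * Q (n + 1) = Q (n + 2) + C (γ (n + 1)) * Q n) (h1 : Q 1 = X)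
    (hγ0 : γ 0 = 0) (n : ℕ) :
    L (derivative (X * Q n * Q n) - C 2 * X * (X * Q n * Q n))
      = (2 * n + 1 - 2 * γ n - 2 * γ (n + 1)) * L (Q n * Q n) := by
  have hexpand : derivative (X * Q n * Q n) - C 2 * X * (X * Q n * Q n)
      = Q n * Q n + C 2 * (Q n * (X * derivative (Q n))) - C 2 * (X * Q n * (X * Q n)) := by
    simp only [derivative_mul, derivative_X, map_ofNat]; ring
  rw [hexpand, map_sub, map_add, L.apply_C_mul, L.apply_C_mul, hQ.apply_mul_X_mul_derivative,
    hQ.apply_X_mul_mul_self hrec h1 hγ0]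
  ring

end IsMonicOrthogonalSeq

end OrthogonalPolynomials

open Real Set

theorem intervalIntegral.integral_eval_sq_mul_pos {a b : ℝ} (hab : a < b) {q : ℝ[X]}
    (hq : q ≠ 0) {g : ℝ → ℝ} (hg : ContinuousOn g (Icc a b)) (hg_nonneg : ∀ x ∈ Icc a b, 0 ≤ g x)
    (hg_pos : ∀ x ∈ Ioo a b, 0 < g x) :
    0 < ∫ x in a..b, q.eval x ^ 2 * g x := by
  obtain ⟨c, hc, hqc⟩ := ((Ioo_infinite hab).sdiff (finite_setOfPred_isRoot hq)).nonempty
  refine intervalIntegral.integral_pos hab ((q.continuous.pow 2).continuousOn.mul hg)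
    (fun x hx => mul_nonneg (sq_nonneg _) (hg_nonneg x (Ioc_subset_Icc_self hx)))
    ⟨c, Ioo_subset_Icc_self hc, mul_pos (pow_two_pos_of_ne_zero hqc) (hg_pos c hc)⟩

theorem continuous_eval_mul_exp_neg_sq (p : ℝ[X]) :
    Continuous fun x => p.eval x * exp (-x ^ 2) :=
  p.continuous.mul (by fun_prop)

noncomputable def truncLinear (z : ℝ) : ℝ[X] →ₗ[ℝ] ℝ where
  toFun := truncL z
  map_add' p q := by
    simp only [truncL, eval_add, add_mul]
    exact intervalIntegral.integral_add
      ((continuous_eval_mul_exp_neg_sq p).intervalIntegrable _ _)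
      ((continuous_eval_mul_exp_neg_sq q).intervalIntegrable _ _)
  map_smul' c p := by
    simp only [truncL, eval_smul, smul_eq_mul, mul_assoc, intervalIntegral.integral_const_mul,
      RingHom.id_apply]

theorem truncLinear_apply (z : ℝ) (p : ℝ[X]) : truncLinear z p = truncL z p := rfl

theorem truncL_derivative_sub_two_X_mul (z : ℝ) (p : ℝ[X]) :
    truncL z (derivative p - C 2 * X * p) = (p.eval z - p.eval (-z)) * exp (-z ^ 2) := by
  have hderiv (x : ℝ) : HasDerivAt (fun x => p.eval x * exp (-x ^ 2))
      ((derivative p - C 2 * X * p).eval x * exp (-x ^ 2)) x := by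
    have hexp : HasDerivAt (fun x => exp (-x ^ 2)) (exp (-x ^ 2) * -(2 * x)) x := by
      simpa using (hasDerivAt_pow 2 x).fun_neg.exp
    refine ((p.hasDerivAt x).fun_mul hexp).congr_deriv ?_
    simp only [eval_sub, eval_mul, eval_C, eval_X]; ring
  rw [truncL, intervalIntegral.integral_eq_sub_of_hasDerivAt (fun x _ => hderiv x)
    ((continuous_eval_mul_exp_neg_sq _).intervalIntegrable _ _), neg_sq, sub_mul]

theorem truncL_mul_self_pos {z : ℝ} (hz : 0 < z) {q : ℝ[X]} (hq : q ≠ 0) :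
    0 < truncL z (q * q) := by
  have := intervalIntegral.integral_eval_sq_mul_pos (neg_lt_self hz) hq
    (g := fun x => exp (-x ^ 2)) (by fun_prop) (fun x _ => (exp_pos _).le) (fun x _ => exp_pos _)
  simpa only [truncL, eval_mul, sq] using this

theorem truncL_X_sub_C_mul_mul_self_neg {z : ℝ} (hz : 0 < z) {q : ℝ[X]} (hq : q ≠ 0) :
    truncL z ((X - C z) * (q * q)) < 0 := by
  have := intervalIntegral.integral_eval_sq_mul_pos (neg_lt_self hz) hq
    (g := fun x => (z - x) * exp (-x ^ 2)) (by fun_prop)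
    (fun x hx => mul_nonneg (by linarith [hx.2]) (exp_pos _).le)
    (fun x hx => mul_pos (by linarith [hx.2]) (exp_pos _))
  rw [truncL, ← neg_pos, ← intervalIntegral.integral_neg]
  convert this using 2
  funext x
  simp only [eval_mul, eval_sub, eval_X, eval_C]; ring

theorem truncL_one (z : ℝ) : truncL z 1 = sqrt π * errFun z := by
  have hint (a b : ℝ) : IntervalIntegrable (fun x => exp (-x ^ 2)) MeasureTheory.volume a b :=
    (by fun_prop : Continuous fun x : ℝ => exp (-x ^ 2)).intervalIntegrable a b
  have hsymm : ∫ x in (-z)..0, exp (-x ^ 2) = ∫ x in (0 : ℝ)..z, exp (-x ^ 2) := by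
    have := intervalIntegral.integral_comp_neg (a := 0) (b := z) (fun x => exp (-x ^ 2))
    simp only [neg_sq, neg_zero] at this
    exact this.symm
  have hpi : sqrt π ≠ 0 := by positivity
  simp only [truncL, errFun, eval_one, one_mul]
  rw [← intervalIntegral.integral_add_adjacent_intervals (hint (-z) 0) (hint 0 z), hsymm]
  field_simp
  ring

theorem IsMonicOrthogonalSeq.eval_ne_zero {z : ℝ} (hz : 0 < z) {Q : ℕ → ℝ[X]}
    (hQ : IsMonicOrthogonalSeq (truncLinear z) Q) (n : ℕ) : (Q n).eval z ≠ 0 := by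
  intro hroot
  have hQn := hQ.isMonicOfDegree n
  set W := Q n /ₘ (X - C z)
  have hfactor : (X - C z) * W = Q n := mul_divByMonic_eq_iff_isRoot.2 hroot
  have hW : W ≠ 0 := by
    rintro hW
    rw [hW, mul_zero] at hfactor
    exact hQn.ne_zero hfactor.symm
  have hWdeg : W.degree < n := by
    have := degree_divByMonic_lt (Q n) (X - C z) hQn.ne_zero
      (by rw [degree_X_sub_C]; exact zero_lt_one)
    rwa [degree_eq_natDegree hQn.ne_zero, hQn.natDegree_eq] at this
  have horth := hQ.apply_mul_eq_zero_of_degree_lt hWdeg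
  rw [truncLinear_apply, ← hfactor, mul_assoc] at horth
  exact (truncL_X_sub_C_mul_mul_self_neg hz hW).ne horth

theorem truncated_hermite_zeta_general (P : ℝ → ℕ → Polynomial ℝ) (γ : ℕ → ℝ → ℝ)
    (hmonic : ∀ z n, (P z n).Monic) (hdeg : ∀ z n, (P z n).natDegree = n)
    (horth : ∀ z, 0 < z → ∀ m n, m ≠ n → truncL z (P z m * P z n) = 0)
    (hP1 : ∀ z, P z 1 = X)
    (hrec : ∀ z, 0 < z → ∀ n, X * P z (n + 1) = P z (n + 2) + C (γ (n + 1) z) * P z n)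
    (hγ0 : ∀ z, γ 0 z = 0) (z : ℝ) (hz : 0 < z) :
    (∀ n : ℕ, 0 < (z ^ 2 + (n : ℝ) + 1 / 2 - γ n z - γ (n + 1) z) - z ^ 2) ∧
      (z ^ 2 + (0 : ℝ) + 1 / 2 - γ 0 z - γ 1 z) - z ^ 2 =
        z * Real.exp (-z ^ 2) / (Real.sqrt Real.pi * errFun z) := by
  have hQ : IsMonicOrthogonalSeq (truncLinear z) (P z) :=
    ⟨fun n => ⟨hdeg z n, hmonic z n⟩, horth z hz⟩
  have hnorm_pos (n : ℕ) : 0 < truncL z (P z n * P z n) :=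
    truncL_mul_self_pos hz (hQ.isMonicOfDegree n).ne_zero
  have hidentity (n : ℕ) : (2 * n + 1 - 2 * γ n z - 2 * γ (n + 1) z) * truncL z (P z n * P z n)
      = z * ((P z n).eval z ^ 2 + (P z n).eval (-z) ^ 2) * exp (-z ^ 2) := by
    have := hQ.apply_derivative_sub_two_X_mul (γ := (γ · z)) (hrec z hz) (hP1 z) (hγ0 z) n
    rw [truncLinear_apply, truncLinear_apply, truncL_derivative_sub_two_X_mul] at this
    rw [← this]
    simp only [eval_mul, eval_X]
    ring
  refine ⟨fun n => ?_, ?_⟩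
  · have hboundary : 0 < z * ((P z n).eval z ^ 2 + (P z n).eval (-z) ^ 2) * exp (-z ^ 2) := by
      have := hQ.eval_ne_zero hz n
      positivity
    rw [← hidentity n] at hboundary
    linarith [(pos_iff_pos_of_mul_pos hboundary).2 (hnorm_pos n)]
  · have h0 := hidentity 0
    have hnorm0 := hnorm_pos 0
    rw [hQ.zero_eq_one, mul_one, truncL_one] at h0 hnorm0
    rw [hγ0, eq_div_iff hnorm0.ne']
    simp only [eval_one, Nat.cast_zero, hγ0] at h0
    linarith

theorem truncated_hermite_zeta (P : ℝ → ℕ → Polynomial ℝ) (γ h : ℕ → ℝ → ℝ)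
    (hmonic : ∀ z n, (P z n).Monic) (hdeg : ∀ z n, (P z n).natDegree = n)
    (horth : ∀ z, 0 < z → ∀ m n, m ≠ n → truncL z (P z m * P z n) = 0)
    (hP0 : ∀ z, P z 0 = 1) (hP1 : ∀ z, P z 1 = X)
    (hrec : ∀ z, 0 < z → ∀ n, X * P z (n + 1) = P z (n + 2) + C (γ (n + 1) z) * P z n)
    (hh : ∀ n z, h n z = truncL z (P z n * P z n)) (hγ0 : ∀ z, γ 0 z = 0) (z : ℝ) (hz : 0 < z) :
    (∀ n : ℕ, 0 < (z ^ 2 + (n : ℝ) + 1 / 2 - γ n z - γ (n + 1) z) - z ^ 2) ∧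
      (z ^ 2 + (0 : ℝ) + 1 / 2 - γ 0 z - γ 1 z) - z ^ 2 =
        z * Real.exp (-z ^ 2) / (Real.sqrt Real.pi * errFun z) :=
  truncated_hermite_zeta_general P γ hmonic hdeg horth hP1 hrec hγ0 z hz
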